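/- arXiv:1907.00173 — 3 statements merged into one kernel-verified Lean document; each statement's English description precedes it below -/
import Mathlib

section
/- Let M be the 4×4 complex block matrix M = [[A, Re{βB}], [Re{β̄Bᴴ}, |β|²D]] with A = c·I₂ for a real c > 0, B satisfying Bᵀ B = 0 and Bᴴ B̄ = 0, D real symmetric, β ∈ ℂ nonzero, and suppose I_s := D − (1/2)Re{Bᴴ A⁻¹ B} is invertible. Then M is invertible and its inverse equals [[A⁻¹, 0],[0, 0]] + [[A⁻¹Re{βB}],[−I₂]] (|β|² I_s)⁻¹ [Re{β̄Bᴴ}A⁻¹, −I₂]. -/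
open Matrix

/-- Entrywise real part of a complex matrix, viewed again as a complex matrix. -/
noncomputable def ReM (X : Matrix (Fin 2) (Fin 2) ℂ) : Matrix (Fin 2) (Fin 2) ℂ :=
  X.map fun z => (z.re : ℂ)

lemma key (β a b c d : ℂ) (h : a * b + c * d = 0) :
    (((β*a).re:ℂ))*(((β*b).re:ℂ)) + (((β*c).re:ℂ))*(((β*d).re:ℂ))
    = (‖β‖:ℂ)^2 * (1/2:ℂ) *
      ((((starRingEnd ℂ) a * b).re : ℂ) + (((starRingEnd ℂ) c * d).re : ℂ)) := by
  have h' : (starRingEnd ℂ) a * (starRingEnd ℂ) b + (starRingEnd ℂ) c * (starRingEnd ℂ) d = 0 := by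
    have := congrArg (starRingEnd ℂ) h
    simpa [map_add, _root_.map_mul] using this
  have hre : ∀ z : ℂ, (z.re : ℂ) = (z + (starRingEnd ℂ) z) / 2 := by
    intro z
    rw [Complex.add_conj]; push_cast; ring
  have habs : (‖β‖:ℂ)^2 = β * (starRingEnd ℂ) β := by
    rw [← Complex.ofReal_pow, Complex.sq_norm, Complex.mul_conj]
  rw [hre, hre, hre, hre, hre, hre, habs]
  simp only [_root_.map_mul, map_add, Complex.conj_conj, RingHom.map_mul]
  linear_combination (β^2/4) * h + ((starRingEnd ℂ) β^2/4) * h'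

lemma keyM (β : ℂ) (B : Matrix (Fin 2) (Fin 2) ℂ) (hB1 : Bᵀ * B = 0) :
    (ReM (β • B))ᵀ * ReM (β • B)
      = ((‖β‖:ℂ)^2 * (1/2:ℂ)) • ReM (Bᴴ * B) := by
  ext i j
  have h := congrFun (congrFun hB1 i) j
  simp only [Matrix.mul_apply, Fin.sum_univ_two, Matrix.transpose_apply,
    Matrix.zero_apply] at h
  simp only [Matrix.mul_apply, Fin.sum_univ_two, Matrix.transpose_apply, ReM,
    Matrix.map_apply, Matrix.smul_apply, Matrix.conjTranspose_apply, smul_eq_mul,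
    RCLike.star_def]
  rw [Complex.add_re]; push_cast [Complex.add_re]
  exact key β (B 0 i) (B 0 j) (B 1 i) (B 1 j) h

lemma ReM_ofReal_smul (r : ℝ) (X : Matrix (Fin 2) (Fin 2) ℂ) :
    ReM ((r:ℂ) • X) = (r:ℂ) • ReM X := by
  ext i j
  simp [ReM, Matrix.map_apply, Matrix.smul_apply, smul_eq_mul, Complex.mul_re]

/-- block inversion of the Fisher-type matrix
`M = [[A, Re{βB}], [Re{β̄Bᴴ}, |β|²D]]` with `A = c·I₂`, `c > 0`, `β ≠ 0`,
`B` with circular rows, `D` real symmetric, and `I_s = D − ½Re{Bᴴ A⁻¹ B}`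
invertible: `M` is invertible with the stated inverse. -/
theorem stmt6 (c : ℝ) (hc : 0 < c) (β : ℂ) (hβ : β ≠ 0)
    (B : Matrix (Fin 2) (Fin 2) ℂ) (hB1 : Bᵀ * B = 0)
    (hB2 : Bᴴ * B.map (starRingEnd ℂ) = 0)
    (hBrow : ∀ k, B 1 k = -Complex.I * B 0 k)
    (D : Matrix (Fin 2) (Fin 2) ℝ) (hDs : D.IsSymm) :
    let A : Matrix (Fin 2) (Fin 2) ℂ := (c : ℂ) • 1
    let Dc : Matrix (Fin 2) (Fin 2) ℂ := D.map Complex.ofReal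
    let Is : Matrix (Fin 2) (Fin 2) ℂ := Dc - (1 / 2 : ℂ) • ReM (Bᴴ * A⁻¹ * B)
    let Mm : Matrix (Fin 2 ⊕ Fin 2) (Fin 2 ⊕ Fin 2) ℂ :=
      Matrix.fromBlocks A (ReM (β • B)) (ReM ((starRingEnd ℂ) β • Bᴴ))
        (((‖β‖ : ℂ) ^ 2) • Dc)
    ∀ _ : IsUnit Is.det,
      IsUnit Mm.det ∧
      Mm⁻¹ = Matrix.fromBlocks A⁻¹ 0 0 0 +
        Matrix.fromBlocks
          ((A⁻¹ * ReM (β • B)) * (((‖β‖ : ℂ) ^ 2) • Is)⁻¹ *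
            (ReM ((starRingEnd ℂ) β • Bᴴ) * A⁻¹))
          (-(A⁻¹ * ReM (β • B) * (((‖β‖ : ℂ) ^ 2) • Is)⁻¹))
          (-((((‖β‖ : ℂ) ^ 2) • Is)⁻¹ * (ReM ((starRingEnd ℂ) β • Bᴴ) * A⁻¹)))
          ((((‖β‖ : ℂ) ^ 2) • Is)⁻¹) := by
  intro A Dc Is Mm hIs
  have hAdef : A = (c : ℂ) • 1 := rfl
  have hIsdef : Is = Dc - (1 / 2 : ℂ) • ReM (Bᴴ * A⁻¹ * B) := rfl
  have hMmdef : Mm = Matrix.fromBlocks A (ReM (β • B)) (ReM ((starRingEnd ℂ) β • Bᴴ))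
      (((‖β‖ : ℂ) ^ 2) • Dc) := rfl
  have hcne : (c : ℂ) ≠ 0 := by exact_mod_cast hc.ne'
  set z : ℂ := ((‖β‖ : ℂ) ^ 2) with hzdef
  have hzne : z ≠ 0 := by
    rw [hzdef]
    exact pow_ne_zero 2 (by exact_mod_cast (norm_ne_zero_iff.mpr hβ))
  set R : Matrix (Fin 2) (Fin 2) ℂ := ReM (β • B) with hRdef
  set S : Matrix (Fin 2) (Fin 2) ℂ := ReM ((starRingEnd ℂ) β • Bᴴ) with hSdef
  set K : Matrix (Fin 2) (Fin 2) ℂ := z • Is with hKdef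
  -- S = Rᵀ
  have hSR : S = Rᵀ := by
    ext i j
    simp only [hSdef, hRdef, ReM, Matrix.map_apply, Matrix.smul_apply,
      Matrix.transpose_apply, Matrix.conjTranspose_apply, smul_eq_mul, RCLike.star_def]
    have : (starRingEnd ℂ) β * (starRingEnd ℂ) (B j i) = (starRingEnd ℂ) (β * B j i) := by
      rw [_root_.map_mul]
    rw [this, Complex.conj_re]
  -- A inverse
  have hAinv : A⁻¹ = ((c : ℂ)⁻¹) • 1 := by
    apply Matrix.inv_eq_right_inv
    rw [hAdef, smul_mul_smul_comm, one_mul, mul_inv_cancel₀ hcne, one_smul]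
  have hA : A * A⁻¹ = 1 := by
    rw [hAdef, hAinv, smul_mul_smul_comm, one_mul, mul_inv_cancel₀ hcne, one_smul]
  -- Schur identity
  have hSch : S * A⁻¹ * R = z • Dc - K := by
    have e1 : ReM (Bᴴ * A⁻¹ * B) = (c : ℂ)⁻¹ • ReM (Bᴴ * B) := by
      rw [hAinv, Matrix.mul_smul, Matrix.mul_one, Matrix.smul_mul, ← Complex.ofReal_inv,
        ReM_ofReal_smul, Complex.ofReal_inv]
    have e2 : S * A⁻¹ * R = ((c : ℂ)⁻¹ * (z * (1/2:ℂ))) • ReM (Bᴴ * B) := by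
      rw [hSR, hAinv, Matrix.mul_smul, Matrix.mul_one, Matrix.smul_mul, hRdef,
        keyM β B hB1, smul_smul, hzdef]
    rw [e2, hKdef, hIsdef, e1, smul_sub, sub_sub_cancel, smul_smul, smul_smul]
    congr 1
    ring
  -- K invertible
  have hKdet : IsUnit K.det := by
    rw [hKdef, Matrix.det_smul]
    simp only [Fintype.card_fin]
    exact (isUnit_iff_ne_zero.mpr (pow_ne_zero 2 hzne)).mul hIs
  have hK : K * K⁻¹ = 1 := Matrix.mul_nonsing_inv _ hKdet
  have hK' : K⁻¹ * K = 1 := Matrix.nonsing_inv_mul _ hKdet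
  -- right inverse
  have hMN : Mm * (Matrix.fromBlocks A⁻¹ 0 0 0 +
        Matrix.fromBlocks ((A⁻¹ * R) * K⁻¹ * (S * A⁻¹)) (-(A⁻¹ * R * K⁻¹))
          (-(K⁻¹ * (S * A⁻¹))) K⁻¹) = 1 := by
    rw [hMmdef, Matrix.fromBlocks_add, Matrix.fromBlocks_multiply, ← Matrix.fromBlocks_one]
    rw [Matrix.fromBlocks_inj]
    have hAX : ∀ X : Matrix (Fin 2) (Fin 2) ℂ, A * (A⁻¹ * X) = X := fun X => by
      rw [← mul_assoc, hA, one_mul]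
    have hKX : ∀ X : Matrix (Fin 2) (Fin 2) ℂ, K * (K⁻¹ * X) = X := fun X => by
      rw [← mul_assoc, hK, one_mul]
    have hSchX : ∀ X : Matrix (Fin 2) (Fin 2) ℂ,
        S * (A⁻¹ * (R * X)) = z • Dc * X - K * X := fun X => by
      rw [← mul_assoc, ← mul_assoc, hSch, sub_mul]
    refine ⟨?_, ?_, ?_, ?_⟩
    · simp only [zero_add, mul_add, mul_neg, mul_assoc]
      rw [hA, hAX]
      abel
    · simp only [zero_add, mul_neg, mul_assoc]
      rw [hAX]
      abel
    · simp only [zero_add, mul_add, mul_neg, mul_assoc]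
      rw [hSchX, hKX]
      abel
    · simp only [zero_add, mul_neg, mul_one, mul_assoc]
      rw [hSchX, hK]
      abel
  exact ⟨Matrix.isUnit_det_of_right_inverse hMN, Matrix.inv_eq_right_inv hMN⟩
end

section
/- Suppose the 4×4 real Fisher-type matrix I(ψ,W) = (2|s|²/σ²)·Re{Vᴴ W Wᴴ V} with V = [V₁, βV₂], where V₁ = [a, ja], and the inverse of I is decomposed (as in block inversion) as (σ²/(2|s|²))(I_{ip1} + I_{ip2}(β)). Then the trace Tr{I(ψ,W)⁻¹ Vᴴ V} is independent of the complex scalar β (i.e., it equals the value obtained at β = 1). -/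
open Matrix

/-- The 2D steering vector `a(x)`. -/
noncomputable def steer (M N : ℕ) (x₁ x₂ : ℝ) : Fin M × Fin N → ℂ :=
  fun p => Complex.exp (2 * (Real.pi : ℂ) * Complex.I *
    (((p.1 : ℕ) : ℂ) * (x₁ : ℂ) / (M : ℂ) + ((p.2 : ℕ) : ℂ) * (x₂ : ℂ) / (N : ℂ)))

/-- `∂a(x)/∂x₁`. -/
noncomputable def dsteer1 (M N : ℕ) (x₁ x₂ : ℝ) : Fin M × Fin N → ℂ :=
  fun p => 2 * (Real.pi : ℂ) * Complex.I * (((p.1 : ℕ) : ℂ) / (M : ℂ)) * steer M N x₁ x₂ p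

/-- `∂a(x)/∂x₂`. -/
noncomputable def dsteer2 (M N : ℕ) (x₁ x₂ : ℝ) : Fin M × Fin N → ℂ :=
  fun p => 2 * (Real.pi : ℂ) * Complex.I * (((p.2 : ℕ) : ℂ) / (N : ℂ)) * steer M N x₁ x₂ p

/-- `V = [a, j a, β ∂a/∂x₁, β ∂a/∂x₂]`. -/
noncomputable def Vmat (M N : ℕ) (x₁ x₂ : ℝ) (β : ℂ) : Matrix (Fin M × Fin N) (Fin 4) ℂ :=
  Matrix.of fun p k =>
    if k = 0 then steer M N x₁ x₂ p
    else if k = 1 then Complex.I * steer M N x₁ x₂ p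
    else if k = 2 then β * dsteer1 M N x₁ x₂ p
    else β * dsteer2 M N x₁ x₂ p

/-- Exploring beamforming matrix with steering-vector columns
`w_i = (1/√(MN)) a(x + Δ_i)`. -/
noncomputable def Wmat (M N : ℕ) (x₁ x₂ : ℝ) (Δ : Fin 3 → ℝ × ℝ) :
    Matrix (Fin M × Fin N) (Fin 3) ℂ :=
  Matrix.of fun p i =>
    ((1 / Real.sqrt (M * N) : ℝ) : ℂ) * steer M N (x₁ + (Δ i).1) (x₂ + (Δ i).2) p

/-- The Fisher-type matrix `I(ψ,W) = (2|s|²/σ²)·Re{Vᴴ W Wᴴ V}` (entrywise real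
part, viewed as a complex matrix). -/
noncomputable def fisher (M N : ℕ) (x₁ x₂ : ℝ) (Δ : Fin 3 → ℝ × ℝ) (s2 σ2 : ℝ) (β : ℂ) :
    Matrix (Fin 4) (Fin 4) ℂ :=
  ((2 * s2 / σ2 : ℝ) : ℂ) •
    (((Vmat M N x₁ x₂ β)ᴴ * Wmat M N x₁ x₂ Δ * (Wmat M N x₁ x₂ Δ)ᴴ *
        Vmat M N x₁ x₂ β).map fun z => (z.re : ℂ))

/- ------------------- auxiliary material ------------------- -/

/-- The real rotation/scaling matrix associated to `β`. -/
noncomputable def Pmat (β : ℂ) : Matrix (Fin 4) (Fin 4) ℂ :=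
  !![(((β / (‖β‖ : ℂ)).re : ℝ) : ℂ), -(((β / (‖β‖ : ℂ)).im : ℝ) : ℂ), 0, 0;
     (((β / (‖β‖ : ℂ)).im : ℝ) : ℂ), (((β / (‖β‖ : ℂ)).re : ℝ) : ℂ), 0, 0;
     0, 0, ((‖β‖ : ℝ) : ℂ), 0;
     0, 0, 0, ((‖β‖ : ℝ) : ℂ)]

/-- Explicit inverse of `Pmat β`. -/
noncomputable def Qmat (β : ℂ) : Matrix (Fin 4) (Fin 4) ℂ :=
  !![(((β / (‖β‖ : ℂ)).re : ℝ) : ℂ), (((β / (‖β‖ : ℂ)).im : ℝ) : ℂ), 0, 0;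
     -(((β / (‖β‖ : ℂ)).im : ℝ) : ℂ), (((β / (‖β‖ : ℂ)).re : ℝ) : ℂ), 0, 0;
     0, 0, ((‖β‖ : ℝ) : ℂ)⁻¹, 0;
     0, 0, 0, ((‖β‖ : ℝ) : ℂ)⁻¹]

set_option maxHeartbeats 1600000 in
lemma keylem (c s r β : ℂ) (hb : (c + s*Complex.I) * r = β)
    (hbc : (c - s*Complex.I) * r = (starRingEnd ℂ) β) (hn : c*c + s*s = 1)
    (M : Matrix (Fin 4) (Fin 4) ℂ)
    (h1 : ∀ l, M 1 l = -Complex.I * M 0 l) (h2 : ∀ k, M k 1 = Complex.I * M k 0) :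
    diagonal ![1,1,(starRingEnd ℂ) β,(starRingEnd ℂ) β] * M * diagonal ![1,1,β,β] =
    !![c, -s, 0, 0; s, c, 0, 0; 0,0,r,0; 0,0,0,r] * M *
      (!![c, -s, 0, 0; s, c, 0, 0; 0,0,r,0; 0,0,0,r])ᵀ := by
  have hI : Complex.I * Complex.I = -1 := Complex.I_mul_I
  have hr2 : (starRingEnd ℂ) β * β = r * r := by
    linear_combination (-(β))*hbc + (-((c-s*Complex.I)*r))*hb + (r*r)*hn + (-(r*r*s*s))*hI
  have h10 := h1 0; have h12 := h1 2; have h13 := h1 3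
  have h20 := h2 0; have h22 := h2 2; have h23 := h2 3
  have h11 : M 1 1 = Complex.I * (-Complex.I * M 0 0) := by rw [h2 1, h10]
  ext k l
  fin_cases k <;> fin_cases l <;>
    simp [mul_apply, Fin.sum_univ_four, diagonal, Matrix.vecMul, Matrix.vecHead,
      Matrix.vecTail, dotProduct, Function.comp, h10, h11, h12, h13, h20, h22, h23] <;>
  first
  | linear_combination (-(M 0 0)) * hn + (s*s*M 0 0) * hI
  | linear_combination (-(Complex.I*M 0 0)) * hn + (-(s*c*M 0 0)) * hI
  | linear_combination (-(M 0 2)) * hb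
  | linear_combination (-(M 0 3)) * hb
  | linear_combination (Complex.I*M 0 0) * hn + (-(s*c*M 0 0)) * hI
  | linear_combination (Complex.I*Complex.I*M 0 0) * hn + (-(s*s*M 0 0)) * hI
  | linear_combination (Complex.I*M 0 2) * hb + (-(s*M 0 2*r)) * hI
  | linear_combination (Complex.I*M 0 3) * hb + (-(s*M 0 3*r)) * hI
  | linear_combination (-(M 2 0)) * hbc
  | linear_combination (-(Complex.I*M 2 0)) * hbc + (-(s*M 2 0*r)) * hI
  | linear_combination (M 2 2) * hr2
  | linear_combination (M 2 3) * hr2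
  | linear_combination (-(M 3 0)) * hbc
  | linear_combination (-(Complex.I*M 3 0)) * hbc + (-(s*M 3 0*r)) * hI
  | linear_combination (M 3 2) * hr2
  | linear_combination (M 3 3) * hr2

lemma Vfac (M N : ℕ) (x₁ x₂ : ℝ) (β : ℂ) :
    Vmat M N x₁ x₂ β = Vmat M N x₁ x₂ 1 * diagonal ![1,1,β,β] := by
  ext p k
  rw [Matrix.mul_diagonal]
  fin_cases k <;> simp [Vmat, mul_comm]

lemma colrel {M N n : ℕ} (x₁ x₂ : ℝ) (Y : Matrix (Fin n) (Fin M × Fin N) ℂ) (k : Fin n) :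
    (Y * Vmat M N x₁ x₂ 1) k 1 = Complex.I * (Y * Vmat M N x₁ x₂ 1) k 0 := by
  simp only [mul_apply, Vmat, of_apply]
  rw [Finset.mul_sum]
  exact Finset.sum_congr rfl fun p _ => by norm_num; ring

lemma rowrel {M N n : ℕ} (x₁ x₂ : ℝ) (Y : Matrix (Fin M × Fin N) (Fin n) ℂ) (l : Fin n) :
    ((Vmat M N x₁ x₂ 1)ᴴ * Y) 1 l = -Complex.I * ((Vmat M N x₁ x₂ 1)ᴴ * Y) 0 l := by
  simp only [mul_apply, conjTranspose_apply, Vmat, of_apply]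
  rw [Finset.mul_sum]
  refine Finset.sum_congr rfl fun p _ => ?_
  norm_num
  ring

set_option maxHeartbeats 2000000 in
lemma remap (c s r : ℝ) (X : Matrix (Fin 4) (Fin 4) ℂ) :
    ((!![(c:ℂ),-(s:ℂ),0,0; (s:ℂ),(c:ℂ),0,0; 0,0,(r:ℂ),0; 0,0,0,(r:ℂ)] * X *
      (!![(c:ℂ),-(s:ℂ),0,0; (s:ℂ),(c:ℂ),0,0; 0,0,(r:ℂ),0; 0,0,0,(r:ℂ)])ᵀ).map
        fun z => (z.re : ℂ)) =
    !![(c:ℂ),-(s:ℂ),0,0; (s:ℂ),(c:ℂ),0,0; 0,0,(r:ℂ),0; 0,0,0,(r:ℂ)] *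
      (X.map fun z => (z.re : ℂ)) *
      (!![(c:ℂ),-(s:ℂ),0,0; (s:ℂ),(c:ℂ),0,0; 0,0,(r:ℂ),0; 0,0,0,(r:ℂ)])ᵀ := by
  ext i j
  fin_cases i <;> fin_cases j <;>
    simp [mul_apply, Fin.sum_univ_four, Matrix.vecMul, Matrix.vecHead, Matrix.vecTail,
      dotProduct, Function.comp, Complex.add_re, Complex.mul_re, Complex.neg_re,
      Complex.ofReal_re, Complex.ofReal_im, Complex.neg_im, Complex.add_im] <;>
    ring

lemma habs' (β : ℂ) (hβ : β ≠ 0) : ((‖β‖ : ℝ) : ℂ) ≠ 0 := by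
  simpa using (norm_ne_zero_iff.mpr hβ)

lemma hb' (β : ℂ) (hβ : β ≠ 0) : ((((β / (‖β‖ : ℂ)).re : ℝ) : ℂ) +
    (((β / (‖β‖ : ℂ)).im : ℝ) : ℂ) * Complex.I) * ((‖β‖ : ℝ) : ℂ) = β := by
  rw [Complex.re_add_im]
  exact div_mul_cancel₀ β (habs' β hβ)

lemma hbc' (β : ℂ) (hβ : β ≠ 0) : ((((β / (‖β‖ : ℂ)).re : ℝ) : ℂ) -
    (((β / (‖β‖ : ℂ)).im : ℝ) : ℂ) * Complex.I) * ((‖β‖ : ℝ) : ℂ) =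
    (starRingEnd ℂ) β := by
  have h : (starRingEnd ℂ) β = (starRingEnd ℂ) (((((β / (‖β‖ : ℂ)).re : ℝ) : ℂ) +
      (((β / (‖β‖ : ℂ)).im : ℝ) : ℂ) * Complex.I) * ((‖β‖ : ℝ) : ℂ)) := by
    rw [hb' β hβ]
  rw [h]
  simp only [_root_.map_mul, _root_.map_add, Complex.conj_ofReal, Complex.conj_I]
  ring

lemma hn' (β : ℂ) (hβ : β ≠ 0) :
    (((β / (‖β‖ : ℂ)).re : ℝ) : ℂ) * (((β / (‖β‖ : ℂ)).re : ℝ) : ℂ) +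
    (((β / (‖β‖ : ℂ)).im : ℝ) : ℂ) * (((β / (‖β‖ : ℂ)).im : ℝ) : ℂ) = 1 := by
  have h1 : Complex.normSq (β / (‖β‖ : ℂ)) = 1 := by
    rw [map_div₀, Complex.normSq_ofReal, Complex.normSq_eq_norm_sq]
    have h : ‖β‖ ≠ 0 := norm_ne_zero_iff.mpr hβ
    field_simp
  calc _ = ((Complex.normSq (β / (‖β‖ : ℂ)) : ℝ) : ℂ) := by
        rw [Complex.normSq_apply]; push_cast; ring
    _ = 1 := by rw [h1]; norm_num

set_option maxHeartbeats 4000000 in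
/-- `Tr{I(ψ,W)⁻¹ Vᴴ V}` is independent of the complex scalar `β`,
i.e. equals the value obtained at `β = 1` (under invertibility of the Fisher
matrices). -/
theorem stmt7 (M N : ℕ) (hM : 1 ≤ M) (hN : 1 ≤ N) (x₁ x₂ : ℝ)
    (Δ : Fin 3 → ℝ × ℝ) (s2 σ2 : ℝ) (hs : 0 < s2) (hσ : 0 < σ2)
    (β : ℂ) (hβ : β ≠ 0)
    (hinv : IsUnit (fisher M N x₁ x₂ Δ s2 σ2 β).det)
    (hinv1 : IsUnit (fisher M N x₁ x₂ Δ s2 σ2 1).det) :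
    Matrix.trace ((fisher M N x₁ x₂ Δ s2 σ2 β)⁻¹ *
        ((Vmat M N x₁ x₂ β)ᴴ * Vmat M N x₁ x₂ β)) =
    Matrix.trace ((fisher M N x₁ x₂ Δ s2 σ2 1)⁻¹ *
        ((Vmat M N x₁ x₂ 1)ᴴ * Vmat M N x₁ x₂ 1)) := by
  classical
  set c : ℂ := (((β / (‖β‖ : ℂ)).re : ℝ) : ℂ) with hc
  set s : ℂ := (((β / (‖β‖ : ℂ)).im : ℝ) : ℂ) with hs'
  set r : ℂ := ((‖β‖ : ℝ) : ℂ) with hr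
  have habs : r ≠ 0 := habs' β hβ
  have hb : (c + s * Complex.I) * r = β := hb' β hβ
  have hbc : (c - s * Complex.I) * r = (starRingEnd ℂ) β := hbc' β hβ
  have hn : c * c + s * s = 1 := hn' β hβ
  set P : Matrix (Fin 4) (Fin 4) ℂ := !![c, -s, 0, 0; s, c, 0, 0; 0,0,r,0; 0,0,0,r] with hP
  set Q : Matrix (Fin 4) (Fin 4) ℂ := !![c, s, 0, 0; -s, c, 0, 0; 0,0,r⁻¹,0; 0,0,0,r⁻¹] with hQ
  set V1 := Vmat M N x₁ x₂ 1 with hV1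
  set Wm := Wmat M N x₁ x₂ Δ with hW
  set D : Matrix (Fin 4) (Fin 4) ℂ := diagonal ![1,1,β,β] with hD
  set D' : Matrix (Fin 4) (Fin 4) ℂ :=
    diagonal ![1,1,(starRingEnd ℂ) β,(starRingEnd ℂ) β] with hD'
  -- factor V(β)
  have hVd : Vmat M N x₁ x₂ β = V1 * D := Vfac M N x₁ x₂ β
  have hstar : (star ![(1:ℂ),1,β,β] : Fin 4 → ℂ) =
      ![1,1,(starRingEnd ℂ) β,(starRingEnd ℂ) β] := by
    funext k
    fin_cases k <;> simp [Pi.star_apply, Complex.star_def]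
  have hVH : (Vmat M N x₁ x₂ β)ᴴ = D' * V1ᴴ := by
    rw [hVd, Matrix.conjTranspose_mul, Matrix.diagonal_conjTranspose, hstar]
  -- the two structured matrices
  set A := V1ᴴ * Wm * Wmᴴ * V1 with hA
  set G := V1ᴴ * V1 with hG
  have hA1 : ∀ l, A 1 l = -Complex.I * A 0 l := by
    intro l
    have hassoc : A = V1ᴴ * (Wm * (Wmᴴ * V1)) := by
      rw [hA, Matrix.mul_assoc, Matrix.mul_assoc]
    rw [hassoc]
    exact rowrel x₁ x₂ _ l
  have hA2 : ∀ k, A k 1 = Complex.I * A k 0 := by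
    intro k
    rw [hA]
    exact colrel x₁ x₂ _ k
  have hG1 : ∀ l, G 1 l = -Complex.I * G 0 l := fun l => rowrel x₁ x₂ _ l
  have hG2 : ∀ k, G k 1 = Complex.I * G k 0 := fun k => colrel x₁ x₂ _ k
  -- key identities
  have hkeyA : D' * A * D = P * A * Pᵀ := keylem c s r β hb hbc hn A hA1 hA2
  have hkeyG : D' * G * D = P * G * Pᵀ := keylem c s r β hb hbc hn G hG1 hG2
  -- fisher transformation
  have hprod : (Vmat M N x₁ x₂ β)ᴴ * Wm * Wmᴴ * Vmat M N x₁ x₂ β = D' * A * D := by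
    rw [hVH, hVd, hA]
    simp only [Matrix.mul_assoc]
  have hGβ : (Vmat M N x₁ x₂ β)ᴴ * Vmat M N x₁ x₂ β = P * G * Pᵀ := by
    rw [hVH, hVd, ← hkeyG, hG]
    simp only [Matrix.mul_assoc]
  have hFβ : fisher M N x₁ x₂ Δ s2 σ2 β =
      P * fisher M N x₁ x₂ Δ s2 σ2 1 * Pᵀ := by
    unfold fisher
    rw [← hW, ← hV1, hprod, hkeyA, hP]
    rw [remap]
    rw [← hP, Matrix.mul_smul, Matrix.smul_mul]
  -- inverse of P
  have hPtQt : Pᵀ * Qᵀ = 1 := by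
    rw [← Matrix.transpose_mul, ← Matrix.transpose_one]
    congr 1
    ext i j
    fin_cases i <;> fin_cases j <;>
      simp [hQ, hP, mul_apply, Fin.sum_univ_four, Matrix.one_apply, Matrix.vecMul,
        Matrix.vecHead, Matrix.vecTail, dotProduct] <;>
      first
        | linear_combination hn
        | (field_simp; done)
        | ring
  have hQP : Q * P = 1 := by
    ext i j
    fin_cases i <;> fin_cases j <;>
      simp [hQ, hP, mul_apply, Fin.sum_univ_four, Matrix.one_apply, Matrix.vecMul,
        Matrix.vecHead, Matrix.vecTail, dotProduct] <;>
      first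
        | linear_combination hn
        | (field_simp; done)
        | ring
  have hPQ : P * Q = 1 := by
    ext i j
    fin_cases i <;> fin_cases j <;>
      simp [hQ, hP, mul_apply, Fin.sum_univ_four, Matrix.one_apply, Matrix.vecMul,
        Matrix.vecHead, Matrix.vecTail, dotProduct] <;>
      first
        | linear_combination hn
        | (field_simp; done)
        | ring
  -- inverse of fisher β
  set F1 := fisher M N x₁ x₂ Δ s2 σ2 1 with hF1def
  have hF1 : F1 * F1⁻¹ = 1 := Matrix.mul_nonsing_inv _ hinv1
  have hrinv : fisher M N x₁ x₂ Δ s2 σ2 β * (Qᵀ * F1⁻¹ * Q) = 1 := by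
    rw [hFβ]
    calc P * F1 * Pᵀ * (Qᵀ * F1⁻¹ * Q)
        = P * (F1 * (Pᵀ * (Qᵀ * (F1⁻¹ * Q)))) := by simp only [Matrix.mul_assoc]
      _ = P * (F1 * (F1⁻¹ * Q)) := by rw [← Matrix.mul_assoc Pᵀ, hPtQt, Matrix.one_mul]
      _ = P * Q := by rw [← Matrix.mul_assoc F1, hF1, Matrix.one_mul]
      _ = 1 := hPQ
  have hFβinv : (fisher M N x₁ x₂ Δ s2 σ2 β)⁻¹ = Qᵀ * F1⁻¹ * Q :=
    Matrix.inv_eq_right_inv hrinv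
  rw [hFβinv, hGβ]
  have hcollapse : Qᵀ * F1⁻¹ * Q * (P * G * Pᵀ) = Qᵀ * (F1⁻¹ * (G * Pᵀ)) := by
    simp only [Matrix.mul_assoc]
    rw [← Matrix.mul_assoc Q P, hQP, Matrix.one_mul]
  rw [hcollapse, Matrix.trace_mul_comm]
  rw [show F1⁻¹ * (G * Pᵀ) * Qᵀ = F1⁻¹ * G * (Pᵀ * Qᵀ) by simp only [Matrix.mul_assoc]]
  rw [hPtQt, Matrix.mul_one]
end

section
/- For the noiseless observation model above with q exploring directions inside the main lobe of x, the system of equations in the unknowns (Re β, Im β, x₁, x₂) provides at most q + 1 independent real constraints (q amplitude equations plus one absolute phase equation, the relative phases being parameter-independent). Consequently, q = 2 observations cannot determine the 4 real unknowns uniquely, while q = 3 suffices generically; hence the minimum exploration overhead for unique recovery of (β, x) within one cycle is q = 3. -/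
/-- The main-lobe gain function
`y_a(Δ) = (sin(πδ₁)/sin(πδ₁/M)) · (sin(πδ₂)/sin(πδ₂/N))`. -/
noncomputable def ya (M N : ℕ) (δ₁ δ₂ : ℝ) : ℝ :=
  (Real.sin (Real.pi * δ₁) / Real.sin (Real.pi * δ₁ / M)) *
  (Real.sin (Real.pi * δ₂) / Real.sin (Real.pi * δ₂ / N))

/-! ### Auxiliary real-analysis lemmas -/

lemma sin_pi_ne (δ : ℝ) (h1 : |δ| < 1) (h0 : δ ≠ 0) : Real.sin (Real.pi * δ) ≠ 0 := by
  intro h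
  rw [Real.sin_eq_zero_iff] at h
  obtain ⟨n, hn⟩ := h
  have hδ : (n : ℝ) = δ := by
    rw [mul_comm] at hn
    exact mul_left_cancel₀ Real.pi_ne_zero hn
  have : |(n : ℝ)| < 1 := by rw [hδ]; exact h1
  have hn0 : n = 0 := by
    have : |n| < 1 := by exact_mod_cast this
    exact Int.abs_lt_one_iff.mp this
  rw [hn0] at hδ
  exact h0 (by exact_mod_cast hδ.symm)

lemma sin_pi_div_ne (M : ℕ) (hM : 1 ≤ M) (δ : ℝ) (h1 : |δ| < 1) (h0 : δ ≠ 0) :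
    Real.sin (Real.pi * δ / M) ≠ 0 := by
  have hMR : (1 : ℝ) ≤ (M : ℝ) := by exact_mod_cast hM
  have hM0 : (M : ℝ) ≠ 0 := by positivity
  have heq : Real.pi * δ / M = Real.pi * (δ / M) := by ring
  rw [heq]
  apply sin_pi_ne
  · rw [abs_div]
    have hMabs : |(M : ℝ)| = (M : ℝ) := abs_of_pos (by linarith)
    rw [hMabs]
    calc |δ| / (M : ℝ) ≤ |δ| / 1 := by
          apply div_le_div_of_nonneg_left (abs_nonneg _) one_pos hMR
      _ = |δ| := by ring
      _ < 1 := h1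
  · exact div_ne_zero h0 hM0

/-- One factor of `ya`. -/
noncomputable def Fa (M : ℕ) (δ : ℝ) : ℝ :=
  Real.sin (Real.pi * δ) / Real.sin (Real.pi * δ / M)

lemma Fa_ne (M : ℕ) (hM : 1 ≤ M) (δ : ℝ) (h1 : |δ| < 1) (h0 : δ ≠ 0) : Fa M δ ≠ 0 :=
  div_ne_zero (sin_pi_ne δ h1 h0) (sin_pi_div_ne M hM δ h1 h0)

lemma ya_eq_Fa (M N : ℕ) (δ₁ δ₂ : ℝ) : ya M N δ₁ δ₂ = Fa M δ₁ * Fa N δ₂ := rfl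

/-- Find a nondegenerate closed interval inside the main-lobe slab avoiding the two centers. -/
lemma pick_interval (c₁ c₂ u₀ : ℝ) (h₁ : |c₁ - u₀| < 1) (h₂ : |c₂ - u₀| < 1) :
    ∃ a b : ℝ, a < b ∧
      ∀ u ∈ Set.Icc a b, |c₁ - u| < 1 ∧ |c₂ - u| < 1 ∧ u ≠ c₁ ∧ u ≠ c₂ := by
  set L : ℝ := max (c₁ - 1) (c₂ - 1)
  set R : ℝ := min (c₁ + 1) (c₂ + 1)
  have h₁' := abs_lt.mp h₁
  have h₂' := abs_lt.mp h₂
  have hu₀ : u₀ ∈ Set.Ioo L R := by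
    constructor
    · exact max_lt (by linarith) (by linarith)
    · exact lt_min (by linarith) (by linarith)
  have hLR : L < R := hu₀.1.trans hu₀.2
  have hV : ((Set.Ioo L R) \ {c₁, c₂}).Nonempty := by
    apply Set.Infinite.nonempty
    exact (Set.Ioo_infinite hLR).diff (Set.toFinite _)
  obtain ⟨u₁, hu₁⟩ := hV
  have hopen : IsOpen ((Set.Ioo L R) \ {c₁, c₂}) :=
    isOpen_Ioo.sdiff (Set.Finite.isClosed (Set.toFinite _))
  obtain ⟨ε, hε, hball⟩ := Metric.isOpen_iff.mp hopen u₁ hu₁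
  refine ⟨u₁ - ε / 2, u₁ + ε / 2, by linarith, ?_⟩
  intro u hu
  have hmem : u ∈ (Set.Ioo L R) \ {c₁, c₂} := by
    apply hball
    rw [Metric.mem_ball, Real.dist_eq]
    have := hu.1; have := hu.2
    rw [abs_lt]; constructor <;> linarith
  obtain ⟨⟨hL, hR⟩, hne⟩ := hmem
  have hne1 : u ≠ c₁ := fun h => hne (by simp [h])
  have hne2 : u ≠ c₂ := fun h => hne (by simp [h])
  have hL1 : c₁ - 1 ≤ L := le_max_left _ _
  have hL2 : c₂ - 1 ≤ L := le_max_right _ _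
  have hR1 : R ≤ c₁ + 1 := min_le_left _ _
  have hR2 : R ≤ c₂ + 1 := min_le_right _ _
  exact ⟨abs_lt.mpr ⟨by linarith, by linarith⟩, abs_lt.mpr ⟨by linarith, by linarith⟩, hne1, hne2⟩

/-- Sign constancy of a continuous nonvanishing function on a preconnected set. -/
lemma sign_const {f : ℝ → ℝ} {s : Set ℝ} (hcon : IsPreconnected s)
    (hf : ContinuousOn f s) (hne : ∀ x ∈ s, f x ≠ 0) :
    (∀ x ∈ s, 0 < f x) ∨ (∀ x ∈ s, f x < 0) := by
  by_contra h
  push_neg at h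
  obtain ⟨⟨x, hx, hfx⟩, ⟨y, hy, hfy⟩⟩ := h
  have hfx' : f x < 0 := lt_of_le_of_ne hfx (hne x hx)
  have hfy' : 0 < f y := lt_of_le_of_ne hfy (Ne.symm (hne y hy))
  have := hcon.intermediate_value hx hy hf
  obtain ⟨z, hz, hz0⟩ := this ⟨hfx'.le, hfy'.le⟩
  exact hne z hz hz0

/-- IVT step: if `A` strictly increases from `p'` to `p` and `B` from `q'` to `q`
(all values positive), a nontrivial collision of `A u * B q = A p * B v` exists. -/
lemma aux_collision (A B : ℝ → ℝ) (S T : Set ℝ)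
    (hScon : IsPreconnected S) (hTcon : IsPreconnected T)
    (hA : ContinuousOn A S) (hB : ContinuousOn B T)
    (hApos : ∀ u ∈ S, 0 < A u) (hBpos : ∀ v ∈ T, 0 < B v)
    (p p' : ℝ) (hp : p ∈ S) (hp' : p' ∈ S)
    (q q' : ℝ) (hq : q ∈ T) (hq' : q' ∈ T)
    (hAp : A p' < A p) (hBq : B q' < B q) :
    ∃ u ∈ S, ∃ v ∈ T, (u, q) ≠ (p, v) ∧ A u * B q = A p * B v := by
  have hAppos : 0 < A p := hApos p hp
  have hBqpos : 0 < B q := hBpos q hq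
  set m : ℝ := (max (A p') (A p * B q' / B q) + A p) / 2 with hm
  have h1 : A p * B q' / B q < A p := by
    rw [div_lt_iff₀ hBqpos]
    exact mul_lt_mul_of_pos_left hBq hAppos
  have hmax : max (A p') (A p * B q' / B q) < A p := max_lt hAp h1
  have hm1 : m < A p := by rw [hm]; linarith
  have hm2 : max (A p') (A p * B q' / B q) < m := by rw [hm]; linarith
  have hmA : m ∈ Set.Icc (A p') (A p) :=
    ⟨le_of_lt (lt_of_le_of_lt (le_max_left _ _) hm2), hm1.le⟩
  obtain ⟨u, hu, hAu⟩ := hScon.intermediate_value hp' hp hA hmA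
  have ht1 : B q' < m * B q / A p := by
    rw [lt_div_iff₀ hAppos]
    have : A p * B q' / B q < m := lt_of_le_of_lt (le_max_right _ _) hm2
    rw [div_lt_iff₀ hBqpos] at this
    linarith [this]
  have ht2 : m * B q / A p < B q := by
    rw [div_lt_iff₀ hAppos]
    nlinarith [hm1, hBqpos]
  have hmB : m * B q / A p ∈ Set.Icc (B q') (B q) := ⟨ht1.le, ht2.le⟩
  obtain ⟨v, hv, hBv⟩ := hTcon.intermediate_value hq' hq hB hmB
  refine ⟨u, hu, v, hv, ?_, ?_⟩
  · intro h
    have hup : u = p := congrArg Prod.fst h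
    rw [hup] at hAu
    linarith [hAu ▸ hm1]
  · rw [hAu, hBv]
    field_simp

/-- A separable continuous nonvanishing function on a nondegenerate rectangle is not injective. -/
lemma keycomb (A B : ℝ → ℝ) (a b c d : ℝ) (hab : a < b) (hcd : c < d)
    (hA : ContinuousOn A (Set.Icc a b)) (hB : ContinuousOn B (Set.Icc c d))
    (hA0 : ∀ u ∈ Set.Icc a b, A u ≠ 0) (hB0 : ∀ v ∈ Set.Icc c d, B v ≠ 0) :
    ∃ u ∈ Set.Icc a b, ∃ v ∈ Set.Icc c d, ∃ u' ∈ Set.Icc a b, ∃ v' ∈ Set.Icc c d,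
      (u, v) ≠ (u', v') ∧ A u * B v = A u' * B v' := by
  have hma : a ∈ Set.Icc a b := Set.left_mem_Icc.mpr hab.le
  have hmb : b ∈ Set.Icc a b := Set.right_mem_Icc.mpr hab.le
  have hmc : c ∈ Set.Icc c d := Set.left_mem_Icc.mpr hcd.le
  have hmd : d ∈ Set.Icc c d := Set.right_mem_Icc.mpr hcd.le
  -- conversion from |A|·|B| collisions to A·B collisions
  have hconv : ∀ u ∈ Set.Icc a b, ∀ v ∈ Set.Icc c d, ∀ u' ∈ Set.Icc a b, ∀ v' ∈ Set.Icc c d,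
      |A u| * |B v| = |A u'| * |B v'| → A u * B v = A u' * B v' := by
    rcases sign_const isPreconnected_Icc hA hA0 with hpA | hnA <;>
      rcases sign_const isPreconnected_Icc hB hB0 with hpB | hnB <;>
        intro u hu v hv u' hu' v' hv' h
    · rw [abs_of_pos (hpA u hu), abs_of_pos (hpB v hv), abs_of_pos (hpA u' hu'),
        abs_of_pos (hpB v' hv')] at h
      exact h
    · rw [abs_of_pos (hpA u hu), abs_of_neg (hnB v hv), abs_of_pos (hpA u' hu'),
        abs_of_neg (hnB v' hv')] at h
      linear_combination -h
    · rw [abs_of_neg (hnA u hu), abs_of_pos (hpB v hv), abs_of_neg (hnA u' hu'),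
        abs_of_pos (hpB v' hv')] at h
      linear_combination -h
    · rw [abs_of_neg (hnA u hu), abs_of_neg (hnB v hv), abs_of_neg (hnA u' hu'),
        abs_of_neg (hnB v' hv')] at h
      linear_combination h
  set A' : ℝ → ℝ := fun u => |A u| with hA'def
  set B' : ℝ → ℝ := fun v => |B v| with hB'def
  have hA' : ContinuousOn A' (Set.Icc a b) := hA.abs
  have hB' : ContinuousOn B' (Set.Icc c d) := hB.abs
  have hA'pos : ∀ u ∈ Set.Icc a b, 0 < A' u := fun u hu => abs_pos.mpr (hA0 u hu)
  have hB'pos : ∀ v ∈ Set.Icc c d, 0 < B' v := fun v hv => abs_pos.mpr (hB0 v hv)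
  rcases eq_or_ne (A' a) (A' b) with hAe | hAne
  · refine ⟨a, hma, c, hmc, b, hmb, c, hmc, ?_, ?_⟩
    · intro h; exact hab.ne (congrArg Prod.fst h)
    · exact hconv a hma c hmc b hmb c hmc (by rw [show |A a| = A' a from rfl,
        show |A b| = A' b from rfl, hAe])
  rcases eq_or_ne (B' c) (B' d) with hBe | hBne
  · refine ⟨a, hma, c, hmc, a, hma, d, hmd, ?_, ?_⟩
    · intro h; exact hcd.ne (congrArg Prod.snd h)
    · exact hconv a hma c hmc a hma d hmd (by rw [show |B c| = B' c from rfl,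
        show |B d| = B' d from rfl, hBe])
  rcases hAne.lt_or_gt with hA1 | hA1 <;> rcases hBne.lt_or_gt with hB1 | hB1
  · -- A' a < A' b, B' c < B' d : p = b, p' = a, q = d, q' = c
    obtain ⟨u, hu, v, hv, hne, heq⟩ := aux_collision A' B' _ _ isPreconnected_Icc
      isPreconnected_Icc hA' hB' hA'pos hB'pos b a hmb hma d c hmd hmc hA1 hB1
    exact ⟨u, hu, d, hmd, b, hmb, v, hv, hne, hconv u hu d hmd b hmb v hv heq⟩
  · -- A' a < A' b, B' d < B' c : q = c, q' = d
    obtain ⟨u, hu, v, hv, hne, heq⟩ := aux_collision A' B' _ _ isPreconnected_Icc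
      isPreconnected_Icc hA' hB' hA'pos hB'pos b a hmb hma c d hmc hmd hA1 hB1
    exact ⟨u, hu, c, hmc, b, hmb, v, hv, hne, hconv u hu c hmc b hmb v hv heq⟩
  · -- A' b < A' a, B' c < B' d : p = a, p' = b
    obtain ⟨u, hu, v, hv, hne, heq⟩ := aux_collision A' B' _ _ isPreconnected_Icc
      isPreconnected_Icc hA' hB' hA'pos hB'pos a b hma hmb d c hmd hmc hA1 hB1
    exact ⟨u, hu, d, hmd, a, hma, v, hv, hne, hconv u hu d hmd a hma v hv heq⟩
  · obtain ⟨u, hu, v, hv, hne, heq⟩ := aux_collision A' B' _ _ isPreconnected_Icc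
      isPreconnected_Icc hA' hB' hA'pos hB'pos a b hma hmb c d hmc hmd hA1 hB1
    exact ⟨u, hu, c, hmc, a, hma, v, hv, hne, hconv u hu c hmc a hma v hv heq⟩

/-- The algebraic collision step: given matching amplitude products and matching phase
products, a modified `β'` reproduces both observations. -/
lemma collide (s r : ℝ) (β : ℂ) (g₁ g₂ g₁' g₂' : ℝ) (e₁ e₂ e₁' e₂' : ℂ)
    (hβ : β ≠ 0) (hg₁ : g₁ ≠ 0) (hg₁' : g₁' ≠ 0) (he₁ : e₁ ≠ 0) (he₁' : e₁' ≠ 0)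
    (hg : g₁ * g₂' = g₂ * g₁') (he : e₁ * e₂' = e₂ * e₁') :
    ∃ β' : ℂ, β' ≠ 0 ∧
      ((s : ℂ) * β' / (r : ℂ)) * (g₁' : ℂ) * e₁' = ((s : ℂ) * β / (r : ℂ)) * (g₁ : ℂ) * e₁ ∧
      ((s : ℂ) * β' / (r : ℂ)) * (g₂' : ℂ) * e₂' = ((s : ℂ) * β / (r : ℂ)) * (g₂ : ℂ) * e₂ := by
  have hg₁C : (g₁ : ℂ) ≠ 0 := Complex.ofReal_ne_zero.mpr hg₁
  have hg₁'C : (g₁' : ℂ) ≠ 0 := Complex.ofReal_ne_zero.mpr hg₁'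
  have hgC : (g₁ : ℂ) * (g₂' : ℂ) = (g₂ : ℂ) * (g₁' : ℂ) := by exact_mod_cast hg
  refine ⟨β * (g₁ : ℂ) * e₁ / ((g₁' : ℂ) * e₁'), ?_, ?_, ?_⟩
  · exact div_ne_zero (mul_ne_zero (mul_ne_zero hβ hg₁C) he₁) (mul_ne_zero hg₁'C he₁')
  · have key1 : β * (g₁ : ℂ) * e₁ / ((g₁' : ℂ) * e₁') * (g₁' : ℂ) * e₁' =
        β * (g₁ : ℂ) * e₁ := by field_simp
    linear_combination ((s : ℂ) / (r : ℂ)) * key1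
  · have key2 : β * (g₁ : ℂ) * e₁ / ((g₁' : ℂ) * e₁') * (g₂' : ℂ) * e₂' =
        β * (g₂ : ℂ) * e₂ := by
      rw [div_mul_eq_mul_div, div_mul_eq_mul_div, div_eq_iff (mul_ne_zero hg₁'C he₁')]
      linear_combination (β * e₁ * e₂') * hgC + (β * (g₂ : ℂ) * (g₁' : ℂ)) * he
    linear_combination ((s : ℂ) / (r : ℂ)) * key2

/-- with `q = 2` noiseless observations
`y_j = (|s|β/√(MN)) y_a(ω_j − x) e^{−jπ((M−1)(ω_{j1}−x₁)/M + (N−1)(ω_{j2}−x₂)/N)}`,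
the 4 real unknowns `(Re β, Im β, x₁, x₂)` cannot be determined uniquely: the
map `(β, x) ↦ (y₁, y₂)` is not injective on the (nonempty) main-lobe domain.
Hence two explorations per cycle do not suffice (while three do, giving a
minimum exploration overhead of `q = 3`). -/
theorem stmt19 (M N : ℕ) (hM : 1 ≤ M) (hN : 1 ≤ N) (s : ℝ) (hs : 0 < s)
    (ω₁ ω₂ : ℝ × ℝ) :
    let obs : ℂ × (ℝ × ℝ) → ℝ × ℝ → ℂ := fun p ω =>
      ((s : ℂ) * p.1 / (Real.sqrt (M * N) : ℂ)) *
        ((ya M N (ω.1 - p.2.1) (ω.2 - p.2.2) : ℝ) : ℂ) *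
        Complex.exp
          (-((Real.pi * (((M : ℝ) - 1) * (ω.1 - p.2.1) / M +
              ((N : ℝ) - 1) * (ω.2 - p.2.2) / N) : ℝ) : ℂ) * Complex.I)
    let D : Set (ℂ × (ℝ × ℝ)) := {p | p.1 ≠ 0 ∧
      |ω₁.1 - p.2.1| < 1 ∧ |ω₁.2 - p.2.2| < 1 ∧
      |ω₂.1 - p.2.1| < 1 ∧ |ω₂.2 - p.2.2| < 1}
    D.Nonempty → ¬ Set.InjOn (fun p => (obs p ω₁, obs p ω₂)) D := by
  intro obs D hne hinj
  obtain ⟨p₀, hp₀⟩ := hne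
  obtain ⟨hβ₀, h11, h12, h21, h22⟩ := hp₀
  -- pick intervals
  obtain ⟨a, b, hab, hI⟩ := pick_interval ω₁.1 ω₂.1 p₀.2.1 h11 h21
  obtain ⟨c, d, hcd, hJ⟩ := pick_interval ω₁.2 ω₂.2 p₀.2.2 h12 h22
  -- the separable ratio functions
  set A : ℝ → ℝ := fun u => Fa M (ω₁.1 - u) / Fa M (ω₂.1 - u) with hAdef
  set B : ℝ → ℝ := fun v => Fa N (ω₁.2 - v) / Fa N (ω₂.2 - v) with hBdef
  have hFa1 : ∀ u ∈ Set.Icc a b, Fa M (ω₁.1 - u) ≠ 0 := fun u hu =>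
    Fa_ne M hM _ ((hI u hu).1) (sub_ne_zero.mpr (fun h => ((hI u hu).2.2.1) h.symm))
  have hFa2 : ∀ u ∈ Set.Icc a b, Fa M (ω₂.1 - u) ≠ 0 := fun u hu =>
    Fa_ne M hM _ ((hI u hu).2.1) (sub_ne_zero.mpr (fun h => ((hI u hu).2.2.2) h.symm))
  have hFb1 : ∀ v ∈ Set.Icc c d, Fa N (ω₁.2 - v) ≠ 0 := fun v hv =>
    Fa_ne N hN _ ((hJ v hv).1) (sub_ne_zero.mpr (fun h => ((hJ v hv).2.2.1) h.symm))
  have hFb2 : ∀ v ∈ Set.Icc c d, Fa N (ω₂.2 - v) ≠ 0 := fun v hv =>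
    Fa_ne N hN _ ((hJ v hv).2.1) (sub_ne_zero.mpr (fun h => ((hJ v hv).2.2.2) h.symm))
  have hcont : ∀ (K : ℕ) (c₀ : ℝ) (S : Set ℝ),
      (∀ u ∈ S, Real.sin (Real.pi * (c₀ - u) / K) ≠ 0) →
      ContinuousOn (fun u => Fa K (c₀ - u)) S := by
    intro K c₀ S hden
    apply ContinuousOn.div
    · exact (Real.continuous_sin.comp
        (continuous_const.mul (continuous_const.sub continuous_id))).continuousOn
    · exact (Real.continuous_sin.comp
        ((continuous_const.mul (continuous_const.sub continuous_id)).div_const _)).continuousOn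
    · exact hden
  have hsinden : ∀ (K : ℕ), 1 ≤ K → ∀ (c₀ : ℝ) (S : Set ℝ),
      (∀ u ∈ S, |c₀ - u| < 1 ∧ c₀ - u ≠ 0) →
      ∀ u ∈ S, Real.sin (Real.pi * (c₀ - u) / K) ≠ 0 := by
    intro K hK c₀ S h u hu
    exact sin_pi_div_ne K hK _ (h u hu).1 (h u hu).2
  have hA : ContinuousOn A (Set.Icc a b) := by
    apply ContinuousOn.div
    · exact hcont M ω₁.1 _ (hsinden M hM ω₁.1 _ (fun u hu =>
        ⟨(hI u hu).1, sub_ne_zero.mpr (fun h => ((hI u hu).2.2.1) h.symm)⟩))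
    · exact hcont M ω₂.1 _ (hsinden M hM ω₂.1 _ (fun u hu =>
        ⟨(hI u hu).2.1, sub_ne_zero.mpr (fun h => ((hI u hu).2.2.2) h.symm)⟩))
    · exact hFa2
  have hB : ContinuousOn B (Set.Icc c d) := by
    apply ContinuousOn.div
    · exact hcont N ω₁.2 _ (hsinden N hN ω₁.2 _ (fun v hv =>
        ⟨(hJ v hv).1, sub_ne_zero.mpr (fun h => ((hJ v hv).2.2.1) h.symm)⟩))
    · exact hcont N ω₂.2 _ (hsinden N hN ω₂.2 _ (fun v hv =>
        ⟨(hJ v hv).2.1, sub_ne_zero.mpr (fun h => ((hJ v hv).2.2.2) h.symm)⟩))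
    · exact hFb2
  have hA0 : ∀ u ∈ Set.Icc a b, A u ≠ 0 := fun u hu =>
    div_ne_zero (hFa1 u hu) (hFa2 u hu)
  have hB0 : ∀ v ∈ Set.Icc c d, B v ≠ 0 := fun v hv =>
    div_ne_zero (hFb1 v hv) (hFb2 v hv)
  obtain ⟨u, hu, v, hv, u', hu', v', hv', hnepts, heq⟩ :=
    keycomb A B a b c d hab hcd hA hB hA0 hB0
  -- amplitude product identity
  have hya : ya M N (ω₁.1 - u) (ω₁.2 - v) * ya M N (ω₂.1 - u') (ω₂.2 - v') =
      ya M N (ω₂.1 - u) (ω₂.2 - v) * ya M N (ω₁.1 - u') (ω₁.2 - v') := by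
    rw [ya_eq_Fa, ya_eq_Fa, ya_eq_Fa, ya_eq_Fa]
    rw [hAdef, hBdef] at heq
    simp only at heq
    field_simp [hFa2 u hu, hFa2 u' hu', hFb2 v hv, hFb2 v' hv'] at heq
    linear_combination heq
  -- phase product identity
  have hexp : Complex.exp
        (-((Real.pi * (((M : ℝ) - 1) * (ω₁.1 - u) / M +
            ((N : ℝ) - 1) * (ω₁.2 - v) / N) : ℝ) : ℂ) * Complex.I) *
      Complex.exp
        (-((Real.pi * (((M : ℝ) - 1) * (ω₂.1 - u') / M +
            ((N : ℝ) - 1) * (ω₂.2 - v') / N) : ℝ) : ℂ) * Complex.I) =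
      Complex.exp
        (-((Real.pi * (((M : ℝ) - 1) * (ω₂.1 - u) / M +
            ((N : ℝ) - 1) * (ω₂.2 - v) / N) : ℝ) : ℂ) * Complex.I) *
      Complex.exp
        (-((Real.pi * (((M : ℝ) - 1) * (ω₁.1 - u') / M +
            ((N : ℝ) - 1) * (ω₁.2 - v') / N) : ℝ) : ℂ) * Complex.I) := by
    rw [← Complex.exp_add, ← Complex.exp_add]
    congr 1
    push_cast
    ring
  have hya1 : ya M N (ω₁.1 - u) (ω₁.2 - v) ≠ 0 := by
    rw [ya_eq_Fa]; exact mul_ne_zero (hFa1 u hu) (hFb1 v hv)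
  have hya1' : ya M N (ω₁.1 - u') (ω₁.2 - v') ≠ 0 := by
    rw [ya_eq_Fa]; exact mul_ne_zero (hFa1 u' hu') (hFb1 v' hv')
  obtain ⟨β', hβ', heq1, heq2⟩ := collide s (Real.sqrt (M * N)) p₀.1
    (ya M N (ω₁.1 - u) (ω₁.2 - v)) (ya M N (ω₂.1 - u) (ω₂.2 - v))
    (ya M N (ω₁.1 - u') (ω₁.2 - v')) (ya M N (ω₂.1 - u') (ω₂.2 - v'))
    (Complex.exp (-((Real.pi * (((M : ℝ) - 1) * (ω₁.1 - u) / M +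
        ((N : ℝ) - 1) * (ω₁.2 - v) / N) : ℝ) : ℂ) * Complex.I))
    (Complex.exp (-((Real.pi * (((M : ℝ) - 1) * (ω₂.1 - u) / M +
        ((N : ℝ) - 1) * (ω₂.2 - v) / N) : ℝ) : ℂ) * Complex.I))
    (Complex.exp (-((Real.pi * (((M : ℝ) - 1) * (ω₁.1 - u') / M +
        ((N : ℝ) - 1) * (ω₁.2 - v') / N) : ℝ) : ℂ) * Complex.I))
    (Complex.exp (-((Real.pi * (((M : ℝ) - 1) * (ω₂.1 - u') / M +
        ((N : ℝ) - 1) * (ω₂.2 - v') / N) : ℝ) : ℂ) * Complex.I))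
    hβ₀ hya1 hya1' (Complex.exp_ne_zero _) (Complex.exp_ne_zero _) hya hexp
  -- the two colliding points
  have hmem1 : ((p₀.1, (u, v)) : ℂ × (ℝ × ℝ)) ∈ D :=
    ⟨hβ₀, (hI u hu).1, (hJ v hv).1, (hI u hu).2.1, (hJ v hv).2.1⟩
  have hmem2 : ((β', (u', v')) : ℂ × (ℝ × ℝ)) ∈ D :=
    ⟨hβ', (hI u' hu').1, (hJ v' hv').1, (hI u' hu').2.1, (hJ v' hv').2.1⟩
  have himg : (fun p => (obs p ω₁, obs p ω₂)) ((β', (u', v')) : ℂ × (ℝ × ℝ)) =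
      (fun p => (obs p ω₁, obs p ω₂)) ((p₀.1, (u, v)) : ℂ × (ℝ × ℝ)) := by
    have hobs : obs = fun p ω =>
      ((s : ℂ) * p.1 / (Real.sqrt (M * N) : ℂ)) *
        ((ya M N (ω.1 - p.2.1) (ω.2 - p.2.2) : ℝ) : ℂ) *
        Complex.exp
          (-((Real.pi * (((M : ℝ) - 1) * (ω.1 - p.2.1) / M +
              ((N : ℝ) - 1) * (ω.2 - p.2.2) / N) : ℝ) : ℂ) * Complex.I) := rfl
    rw [hobs]
    simp only [Prod.mk.injEq]
    exact ⟨heq1, heq2⟩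
  have := hinj hmem2 hmem1 himg
  have hxx : ((u' : ℝ), (v' : ℝ)) = (u, v) := congrArg Prod.snd this
  exact hnepts (Prod.ext (congrArg Prod.fst hxx).symm (congrArg Prod.snd hxx).symm)
end
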